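/- arXiv:2510.22496 — 5 statements merged into one kernel-verified Lean document; each statement's English description precedes it below -/
import Mathlib

section
/- Let Ξ ⊆ M be a finite set of centers contained in M, let K_Ξ := span{K_ξ y : ξ ∈ Ξ, y ∈ Y} ⊆ H, and let Π be the orthogonal projection of H onto the closure of K_Ξ. Suppose ‖E_x‖ ≤ k̄ for all x ∈ X, and let f := ∫_X K_ξ(v(ξ)) dμ(ξ) (a Bochner integral in H). Then for every x ∈ X, ‖E_x(f − Π f)‖_Y ≤ k̄ · (μ(X))^{1/2} · (sup_{ξ ∈ M} ‖E_ξ ∘ (id_H − Π) ∘ K_ξ‖_{L(Y)}^{1/2}) · (∫_X ‖v(ξ)‖_Y² dμ(ξ))^{1/2}. (This is the paper's Theorem 3.1, the 'doubling trick' global pointwise error bound for uncertainties in a maneuver vRKHS satisfying the regularity condition f = Lv.) -/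
open MeasureTheory
open scoped InnerProductSpace

/-!
The doubling trick: for an orthogonal projection `Q` and any bounded `B`, the C*-identity
`‖T† T‖ = ‖T‖²` applied to `T = Q B†` gives `‖Q B†‖ = ‖B Q B†‖ ^ (1/2)`, since `Q† Q = Q`.
With `Q = id - P` the projection onto the orthogonal complement of `K_Ξ`, this bounds
`‖Q K_ξ (v ξ)‖` by the supremum times `‖v ξ‖` for almost every `ξ`; pushing `Q` inside the
Bochner integral `f` and applying Cauchy–Schwarz to `∫ ‖v‖` gives the estimate.
-/

section Projection

variable {𝕜 E F : Type*} [RCLike 𝕜]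
  [NormedAddCommGroup E] [InnerProductSpace 𝕜 E]
  [NormedAddCommGroup F] [InnerProductSpace 𝕜 F]

theorem Submodule.eq_starProjection_of_forall_mem_of_sub_mem_orthogonal
    (K : Submodule 𝕜 E) [K.HasOrthogonalProjection] {P : E →L[𝕜] E}
    (hP : ∀ g, P g ∈ K ∧ g - P g ∈ Kᗮ) : P = K.starProjection :=
  ContinuousLinearMap.ext fun g => (K.eq_starProjection_of_mem_orthogonal (hP g).1 (hP g).2).symm

variable [CompleteSpace E] [CompleteSpace F]

theorem Submodule.sqrt_norm_comp_starProjection_comp_adjoint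
    (U : Submodule 𝕜 E) [U.HasOrthogonalProjection] (B : E →L[𝕜] F) :
    √‖B ∘L (U.starProjection ∘L B.adjoint)‖ = ‖U.starProjection ∘L B.adjoint‖ := by
  have hsq : B ∘L (U.starProjection ∘L B.adjoint) =
      (U.starProjection ∘L B.adjoint).adjoint ∘L (U.starProjection ∘L B.adjoint) := by
    rw [ContinuousLinearMap.adjoint_comp, ContinuousLinearMap.adjoint_adjoint,
      (isSelfAdjoint_starProjection U).adjoint_eq]
    ext y
    simp [U.starProjection_eq_self_iff.mpr]
  rw [hsq, ContinuousLinearMap.norm_adjoint_comp_self, Real.sqrt_mul_self (norm_nonneg _)]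

theorem Submodule.norm_starProjection_adjoint_apply_le_iSup
    (U : Submodule 𝕜 E) [U.HasOrthogonalProjection] {ι : Type*} {B : ι → E →L[𝕜] F} {c : ℝ}
    (hB : ∀ i, ‖B i‖ ≤ c) (i : ι) (y : F) :
    ‖U.starProjection ((B i).adjoint y)‖ ≤
      (⨆ j, √‖B j ∘L (U.starProjection ∘L (B j).adjoint)‖) * ‖y‖ := by
  simp only [U.sqrt_norm_comp_starProjection_comp_adjoint]
  have hbdd : BddAbove (Set.range fun j => ‖U.starProjection ∘L (B j).adjoint‖) := by
    refine ⟨c, Set.forall_mem_range.2 fun j => ?_⟩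
    calc ‖U.starProjection ∘L (B j).adjoint‖ ≤ ‖U.starProjection‖ * ‖(B j).adjoint‖ :=
          ContinuousLinearMap.opNorm_comp_le _ _
      _ ≤ 1 * ‖B j‖ := by
          rw [LinearIsometryEquiv.norm_map]
          gcongr
          exact U.starProjection_norm_le
      _ ≤ c := by rw [one_mul]; exact hB j
  calc ‖U.starProjection ((B i).adjoint y)‖ ≤ ‖U.starProjection ∘L (B i).adjoint‖ * ‖y‖ :=
        (U.starProjection ∘L (B i).adjoint).le_opNorm y
    _ ≤ _ := by gcongr; exact le_ciSup hbdd i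

end Projection

theorem integral_le_sqrt_measureReal_mul_sqrt_integral_sq {X : Type*} [MeasurableSpace X]
    (μ : Measure X) [IsFiniteMeasure μ] {g : X → ℝ} (hg0 : 0 ≤ᵐ[μ] g) (hg : MemLp g 2 μ) :
    ∫ ξ, g ξ ∂μ ≤ √(μ.real Set.univ) * √(∫ ξ, g ξ ^ 2 ∂μ) := by
  have h := integral_mul_le_Lp_mul_Lq_of_nonneg Real.HolderConjugate.two_two
    (Filter.Eventually.of_forall fun _ => zero_le_one) hg0
    (memLp_const (1 : ℝ)) (by simpa using hg)
  simp only [one_mul, Real.one_rpow, integral_const, smul_eq_mul, mul_one] at h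
  rw [Real.sqrt_eq_rpow, Real.sqrt_eq_rpow]
  convert h using 3
  simp

theorem doubling_trick_global_pointwise_error_bound_general
    {X H Y : Type*} [MeasurableSpace X]
    [NormedAddCommGroup H] [InnerProductSpace ℝ H] [CompleteSpace H]
    [NormedAddCommGroup Y] [InnerProductSpace ℝ Y] [CompleteSpace Y]
    (E : X → H →L[ℝ] Y)
    (μ : Measure X) [IsFiniteMeasure μ]
    (M : Set X) (hMc : μ Mᶜ = 0)
    (v : X → Y) (hv : AEStronglyMeasurable v μ)
    (hv2 : Integrable (fun ξ => ‖v ξ‖ ^ 2) μ)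
    (hKv : Integrable (fun ξ => (E ξ).adjoint (v ξ)) μ)
    (kbar : ℝ) (hk : ∀ x : X, ‖E x‖ ≤ kbar)
    (Ξ : Set X)
    (P : H →L[ℝ] H)
    (hP : ∀ g : H,
      P g ∈ (Submodule.span ℝ
          {w : H | ∃ ξ ∈ Ξ, ∃ y : Y, w = (E ξ).adjoint y}).topologicalClosure ∧
      g - P g ∈ (Submodule.span ℝ
          {w : H | ∃ ξ ∈ Ξ, ∃ y : Y, w = (E ξ).adjoint y}).topologicalClosureᗮ)
    (f : H) (hf : f = ∫ ξ, (E ξ).adjoint (v ξ) ∂μ) :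
    ∀ x : X,
      ‖(E x) (f - P f)‖
        ≤ kbar * Real.sqrt (μ Set.univ).toReal
            * (⨆ ξ : M, Real.sqrt
                ‖(E (ξ : X)).comp
                    ((ContinuousLinearMap.id ℝ H - P).comp (E (ξ : X)).adjoint)‖)
            * Real.sqrt (∫ ξ, ‖v ξ‖ ^ 2 ∂μ) := by
  intro x
  set K := (Submodule.span ℝ {w : H | ∃ ξ ∈ Ξ, ∃ y : Y, w = (E ξ).adjoint y}).topologicalClosure
  have hQ : ContinuousLinearMap.id ℝ H - P = Kᗮ.starProjection := by
    rw [K.eq_starProjection_of_forall_mem_of_sub_mem_orthogonal hP, K.starProjection_orthogonal]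
  have hfP : f - P f = Kᗮ.starProjection f := by rw [← hQ]; rfl
  rw [hQ, hfP]
  set C := ⨆ ξ : M, √‖E ξ ∘L (Kᗮ.starProjection ∘L (E ξ).adjoint)‖
  have hC : 0 ≤ C := Real.iSup_nonneg fun _ => Real.sqrt_nonneg _
  have hkbar : 0 ≤ kbar := (norm_nonneg _).trans (hk x)
  have hpoint : ∀ᵐ ξ ∂μ, ‖Kᗮ.starProjection ((E ξ).adjoint (v ξ))‖ ≤ C * ‖v ξ‖ := by
    filter_upwards [mem_ae_iff.2 hMc] with ξ hξ
    exact Kᗮ.norm_starProjection_adjoint_apply_le_iSup (B := fun ξ : M => E ξ)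
      (fun ξ => hk ξ) ⟨ξ, hξ⟩ (v ξ)
  have hv_memLp : MemLp (fun ξ => ‖v ξ‖) 2 μ := (memLp_two_iff_integrable_sq hv.norm).2 hv2
  calc ‖E x (Kᗮ.starProjection f)‖ ≤ kbar * ‖Kᗮ.starProjection f‖ :=
        (E x).le_of_opNorm_le (hk x) _
    _ ≤ kbar * (C * ∫ ξ, ‖v ξ‖ ∂μ) := by
        gcongr
        rw [hf, ← ContinuousLinearMap.integral_comp_comm _ hKv, ← integral_const_mul]
        exact norm_integral_le_of_norm_le ((hv_memLp.integrable one_le_two).const_mul C) hpoint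
    _ ≤ kbar * (C * (√(μ.real Set.univ) * √(∫ ξ, ‖v ξ‖ ^ 2 ∂μ))) := by
        gcongr
        exact integral_le_sqrt_measureReal_mul_sqrt_integral_sq μ
          (Filter.Eventually.of_forall fun _ => norm_nonneg _) hv_memLp
    _ = _ := by rw [measureReal_def]; ring

/-- paper's Theorem 3.1, the "doubling trick": Let `Ξ ⊆ M` be a finite
set of centers, `K_Ξ = span{K_ξ y : ξ ∈ Ξ, y ∈ Y}`, and `P` the orthogonal projection
of `H` onto the closure of `K_Ξ`. If `‖E_x‖ ≤ k̄` for all `x ∈ X` and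
`f = ∫ K_ξ (v ξ) dμ` (Bochner integral), then for every `x ∈ X`,
`‖E_x (f − P f)‖_Y ≤ k̄ · μ(X)^{1/2} · (sup_{ξ∈M} ‖E_ξ ∘ (id − P) ∘ K_ξ‖^{1/2}) ·
(∫ ‖v ξ‖² dμ)^{1/2}`. -/
theorem doubling_trick_global_pointwise_error_bound
    {X H Y : Type*} [MeasurableSpace X]
    [NormedAddCommGroup H] [InnerProductSpace ℝ H] [CompleteSpace H]
    [NormedAddCommGroup Y] [InnerProductSpace ℝ Y] [CompleteSpace Y]
    (E : X → H →L[ℝ] Y)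
    (μ : Measure X) [IsFiniteMeasure μ]
    (M : Set X) (hM : MeasurableSet M) (hMc : μ Mᶜ = 0)
    (v : X → Y) (hv : AEStronglyMeasurable v μ)
    (hv2 : Integrable (fun ξ => ‖v ξ‖ ^ 2) μ)
    (hKv : Integrable (fun ξ => (E ξ).adjoint (v ξ)) μ)
    (kbar : ℝ) (hk : ∀ x : X, ‖E x‖ ≤ kbar)
    (Ξ : Set X) (hΞfin : Ξ.Finite) (hΞM : Ξ ⊆ M)
    (P : H →L[ℝ] H)
    (hP : ∀ g : H,
      P g ∈ (Submodule.span ℝ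
          {w : H | ∃ ξ ∈ Ξ, ∃ y : Y, w = (E ξ).adjoint y}).topologicalClosure ∧
      g - P g ∈ (Submodule.span ℝ
          {w : H | ∃ ξ ∈ Ξ, ∃ y : Y, w = (E ξ).adjoint y}).topologicalClosureᗮ)
    (f : H) (hf : f = ∫ ξ, (E ξ).adjoint (v ξ) ∂μ) :
    ∀ x : X,
      ‖(E x) (f - P f)‖
        ≤ kbar * Real.sqrt (μ Set.univ).toReal
            * (⨆ ξ : M, Real.sqrt
                ‖(E (ξ : X)).comp
                    ((ContinuousLinearMap.id ℝ H - P).comp (E (ξ : X)).adjoint)‖)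
            * Real.sqrt (∫ ξ, ‖v ξ‖ ^ 2 ∂μ) :=
  doubling_trick_global_pointwise_error_bound_general E μ M hMc v hv hv2 hKv kbar hk Ξ P hP f hf
end

section
/- Let U ⊆ H be a closed subspace and P the orthogonal projection of H onto U. Then for every f ∈ H, x ∈ X, and y ∈ Y, ⟪E_x(f − P f), y⟫_Y ≤ ‖K_x y − P(K_x y)‖_H · ‖f − P f‖_H ≤ ‖K_x y − P(K_x y)‖_H · ‖f‖_H. (The directional pointwise error bound of item (2) of the paper's theorem on properties of the generalized power function: (E_x(I−Π_U)f, y) ≤ P_U(x,y)·‖(I−Π_U)f‖.) -/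
open scoped InnerProductSpace

/-- Directional pointwise error bound for the generalized power function:
for a closed subspace `U ⊆ H` with orthogonal projection `P`, for every `f ∈ H`,
`x ∈ X`, `y ∈ Y`,
`⟪E_x(f − P f), y⟫_Y ≤ ‖K_x y − P(K_x y)‖ · ‖f − P f‖ ≤ ‖K_x y − P(K_x y)‖ · ‖f‖`. -/
theorem power_function_directional_pointwise_bound
    {X H Y : Type*}
    [NormedAddCommGroup H] [InnerProductSpace ℝ H] [CompleteSpace H]
    [NormedAddCommGroup Y] [InnerProductSpace ℝ Y] [CompleteSpace Y]
    (E : X → H →L[ℝ] Y)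
    (U : Submodule ℝ H) (hU : IsClosed (U : Set H))
    (P : H →L[ℝ] H) (hP : ∀ h : H, P h ∈ U ∧ h - P h ∈ Uᗮ) :
    ∀ (f : H) (x : X) (y : Y),
      ⟪(E x) (f - P f), y⟫_ℝ ≤ ‖(E x).adjoint y - P ((E x).adjoint y)‖ * ‖f - P f‖ ∧
      ‖(E x).adjoint y - P ((E x).adjoint y)‖ * ‖f - P f‖
        ≤ ‖(E x).adjoint y - P ((E x).adjoint y)‖ * ‖f‖ := by
  intro f x y
  set K := (E x).adjoint y with hK
  have h1 : ⟪(E x) (f - P f), y⟫_ℝ = ⟪f - P f, K⟫_ℝ := by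
    rw [hK, ContinuousLinearMap.adjoint_inner_right]
  have h2 : ⟪f - P f, K⟫_ℝ = ⟪f - P f, K - P K⟫_ℝ := by
    have : ⟪f - P f, P K⟫_ℝ = 0 := by
      rw [real_inner_comm]; exact (hP f).2 (P K) (hP K).1
    rw [inner_sub_right, this, sub_zero]
  constructor
  · calc ⟪(E x) (f - P f), y⟫_ℝ = ⟪f - P f, K - P K⟫_ℝ := by rw [h1, h2]
    _ ≤ ‖f - P f‖ * ‖K - P K‖ := real_inner_le_norm _ _
    _ = ‖K - P K‖ * ‖f - P f‖ := mul_comm _ _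
  · apply mul_le_mul_of_nonneg_left _ (norm_nonneg _)
    have horth : ⟪P f, f - P f⟫_ℝ = 0 := (hP f).2 (P f) (hP f).1
    have : ‖f‖ ^ 2 = ‖P f‖ ^ 2 + ‖f - P f‖ ^ 2 := by
      have := norm_add_sq_real (P f) (f - P f)
      simpa [horth, add_sub_cancel] using this
    nlinarith [norm_nonneg (P f), norm_nonneg (f - P f), norm_nonneg f]
end

section
/- Let U ⊆ H be a closed subspace and P the orthogonal projection of H onto U. Then for every f ∈ H and x ∈ X, ‖E_x(f − P f)‖_Y ≤ ‖E_x ∘ (id_H − P) ∘ K_x‖_{L(Y)}^{1/2} · ‖f − P f‖_H. (The Euclidean-norm pointwise error bound of the paper's power-function theorem: ‖E_x(I−Π_U)f‖₂ ≤ √‖𝔎(x,x) − 𝔎_U(x,x)‖ · ‖(I−Π_U)f‖.) -/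
open scoped InnerProductSpace

/-- Euclidean-norm pointwise error bound of the power-function theorem:
for a closed subspace `U ⊆ H` with orthogonal projection `P`, for every `f ∈ H` and
`x ∈ X`, `‖E_x(f − P f)‖_Y ≤ ‖E_x ∘ (id_H − P) ∘ K_x‖^{1/2} · ‖f − P f‖`. -/
theorem power_function_pointwise_norm_bound
    {X H Y : Type*}
    [NormedAddCommGroup H] [InnerProductSpace ℝ H] [CompleteSpace H]
    [NormedAddCommGroup Y] [InnerProductSpace ℝ Y] [CompleteSpace Y]
    (E : X → H →L[ℝ] Y)
    (U : Submodule ℝ H) (hU : IsClosed (U : Set H))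
    (P : H →L[ℝ] H) (hP : ∀ h : H, P h ∈ U ∧ h - P h ∈ Uᗮ) :
    ∀ (f : H) (x : X),
      ‖(E x) (f - P f)‖
        ≤ Real.sqrt ‖(E x).comp ((ContinuousLinearMap.id ℝ H - P).comp (E x).adjoint)‖
            * ‖f - P f‖ := by
  intro f x
  set Q : H →L[ℝ] H := ContinuousLinearMap.id ℝ H - P with hQ
  have hQapply : ∀ h : H, Q h = h - P h := by intro h; simp [hQ]
  -- P vanishes on Uᗮ
  have hPzero : ∀ h : H, h ∈ Uᗮ → P h = 0 := by
    intro h hh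
    have h1 : P h ∈ U := (hP h).1
    have h3 : P h ∈ Uᗮ := by
      have : h - (h - P h) ∈ Uᗮ := Submodule.sub_mem _ hh (hP h).2
      simpa using this
    have := h3 (P h) h1
    simpa [inner_self_eq_zero] using this
  have hQmem : ∀ h : H, Q h ∈ Uᗮ := by
    intro h; rw [hQapply]; exact (hP h).2
  -- Q is idempotent
  have hQidem : Q.comp Q = Q := by
    ext h
    simp only [ContinuousLinearMap.comp_apply]
    rw [hQapply (Q h), hPzero (Q h) (hQmem h), sub_zero]
  -- Q is self-adjoint
  have hQsa : ContinuousLinearMap.adjoint Q = Q := by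
    symm
    rw [ContinuousLinearMap.eq_adjoint_iff]
    intro a b
    have key : ∀ u v : H, ⟪Q u, v⟫_ℝ = ⟪Q u, Q v⟫_ℝ := by
      intro u v
      have hv : v = P v + Q v := by rw [hQapply]; abel
      have h0 : ⟪Q u, P v⟫_ℝ = 0 := (real_inner_comm _ _).trans (hQmem u (P v) (hP v).1)
      calc ⟪Q u, v⟫_ℝ = ⟪Q u, P v + Q v⟫_ℝ := by rw [← hv]
        _ = ⟪Q u, P v⟫_ℝ + ⟪Q u, Q v⟫_ℝ := inner_add_right _ _ _
        _ = ⟪Q u, Q v⟫_ℝ := by rw [h0, zero_add]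
    calc ⟪Q a, b⟫_ℝ = ⟪Q a, Q b⟫_ℝ := key a b
      _ = ⟪Q b, Q a⟫_ℝ := real_inner_comm _ _
      _ = ⟪Q b, a⟫_ℝ := (key b a).symm
      _ = ⟪a, Q b⟫_ℝ := real_inner_comm _ _
  set S : H →L[ℝ] Y := (E x).comp Q with hS
  have hSadj : ContinuousLinearMap.adjoint S = Q.comp (ContinuousLinearMap.adjoint (E x)) := by
    rw [hS, ContinuousLinearMap.adjoint_comp, hQsa]
  have hT : (E x).comp (Q.comp (ContinuousLinearMap.adjoint (E x)))
      = S.comp (ContinuousLinearMap.adjoint S) := by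
    rw [hSadj, hS]
    rw [ContinuousLinearMap.comp_assoc, ← ContinuousLinearMap.comp_assoc Q Q, hQidem]
  have hnorm : ‖(E x).comp (Q.comp (ContinuousLinearMap.adjoint (E x)))‖ = ‖S‖ * ‖S‖ := by
    rw [hT]
    have := ContinuousLinearMap.norm_adjoint_comp_self (ContinuousLinearMap.adjoint S)
    rw [ContinuousLinearMap.adjoint_adjoint] at this
    rw [this, ContinuousLinearMap.adjoint.norm_map]
  have hEg : (E x) (f - P f) = S (f - P f) := by
    rw [hS]
    simp only [ContinuousLinearMap.comp_apply]
    congr 1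
    rw [hQapply, hPzero (f - P f) (hP f).2, sub_zero]
  rw [hEg, hnorm, Real.sqrt_mul_self (norm_nonneg S)]
  exact S.le_opNorm _
end

section
/- Take Y = EuclideanSpace ℝ (Fin m) with standard basis (e_i). Let U ⊆ H be a closed subspace and P the orthogonal projection of H onto U. Then for every f ∈ H and x ∈ X, max_{i} |(E_x(f − P f))_i| ≤ (max_i ⟪(E_x ∘ (id_H − P) ∘ K_x)(e_i), e_i⟫^{1/2}) · ‖f − P f‖_H. (The ℓ∞ pointwise error bound of the paper's power-function theorem: ‖E_x(I−Π_U)f‖_∞ ≤ max_i √|𝔎_{ii}(x,x) − 𝔎_{U,ii}(x,x)| · ‖(I−Π_U)f‖.) -/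
open scoped InnerProductSpace

/-- ℓ∞ pointwise error bound of the power-function theorem, with
`Y = EuclideanSpace ℝ (Fin m)` and standard basis vectors `e_i`:
for a closed subspace `U ⊆ H` with orthogonal projection `P`, for every `f ∈ H` and
`x ∈ X`,
`max_i |(E_x(f − P f))_i| ≤ (max_i ⟪(E_x ∘ (id − P) ∘ K_x) e_i, e_i⟫^{1/2}) · ‖f − P f‖`. -/
theorem power_function_pointwise_sup_bound
    {X H : Type*} {m : ℕ}
    [NormedAddCommGroup H] [InnerProductSpace ℝ H] [CompleteSpace H]
    (E : X → H →L[ℝ] EuclideanSpace ℝ (Fin m))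
    (U : Submodule ℝ H) (hU : IsClosed (U : Set H))
    (P : H →L[ℝ] H) (hP : ∀ h : H, P h ∈ U ∧ h - P h ∈ Uᗮ) :
    ∀ (f : H) (x : X),
      (⨆ i : Fin m, |(E x) (f - P f) i|)
        ≤ (⨆ i : Fin m,
            Real.sqrt
              ⟪((E x).comp ((ContinuousLinearMap.id ℝ H - P).comp (E x).adjoint))
                  (EuclideanSpace.single i (1 : ℝ)),
                EuclideanSpace.single i (1 : ℝ)⟫_ℝ)
            * ‖f - P f‖ := by
  intro f x
  rcases Nat.eq_zero_or_pos m with hm | hm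
  · subst hm
    simp [Real.iSup_of_isEmpty]
  · have : Nonempty (Fin m) := ⟨⟨0, hm⟩⟩
    set K := (E x).adjoint with hK
    set g := f - P f with hg
    have hgU : g ∈ Uᗮ := (hP f).2
    set S : ℝ := ⨆ i : Fin m,
        Real.sqrt
          ⟪((E x).comp ((ContinuousLinearMap.id ℝ H - P).comp K))
              (EuclideanSpace.single i (1 : ℝ)),
            EuclideanSpace.single i (1 : ℝ)⟫_ℝ with hS
    refine ciSup_le fun i => ?_
    set e : EuclideanSpace ℝ (Fin m) := EuclideanSpace.single i (1 : ℝ) with he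
    set q : H := K e - P (K e) with hq
    have hqU : q ∈ Uᗮ := (hP (K e)).2
    -- inner product value
    have hval : ⟪((E x).comp ((ContinuousLinearMap.id ℝ H - P).comp K)) e, e⟫_ℝ
        = ‖q‖ ^ 2 := by
      have h1 : ((E x).comp ((ContinuousLinearMap.id ℝ H - P).comp K)) e
          = E x q := by
        simp [hq, ContinuousLinearMap.comp_apply, ContinuousLinearMap.sub_apply]
      rw [h1]
      have h2 : ⟪E x q, e⟫_ℝ = ⟪q, K e⟫_ℝ := by
        rw [hK, ContinuousLinearMap.adjoint_inner_right]
      rw [h2]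
      have h3 : ⟪q, K e⟫_ℝ = ⟪q, q⟫_ℝ := by
        have : ⟪q, P (K e)⟫_ℝ = 0 := by
          rw [real_inner_comm]; exact hqU _ (hP (K e)).1
        calc ⟪q, K e⟫_ℝ = ⟪q, q + P (K e)⟫_ℝ := by rw [hq]; rw [sub_add_cancel]
          _ = ⟪q, q⟫_ℝ + ⟪q, P (K e)⟫_ℝ := inner_add_right _ _ _
          _ = ⟪q, q⟫_ℝ := by rw [this, add_zero]
      rw [h3, real_inner_self_eq_norm_sq]
    -- pointwise
    have hpt : (E x) g i = ⟪g, K e⟫_ℝ := by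
      have : ⟪(E x) g, e⟫_ℝ = (E x) g i := by
        simp [he, EuclideanSpace.inner_single_right]
      rw [← this, hK, ContinuousLinearMap.adjoint_inner_right]
    have horth : ⟪g, K e⟫_ℝ = ⟪g, q⟫_ℝ := by
      have h0 : ⟪g, P (K e)⟫_ℝ = 0 := by
        rw [real_inner_comm]; exact hgU _ (hP (K e)).1
      calc ⟪g, K e⟫_ℝ = ⟪g, q + P (K e)⟫_ℝ := by rw [hq]; rw [sub_add_cancel]
        _ = ⟪g, q⟫_ℝ + ⟪g, P (K e)⟫_ℝ := inner_add_right _ _ _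
        _ = ⟪g, q⟫_ℝ := by rw [h0, add_zero]
    have hbound : |(E x) g i| ≤ ‖q‖ * ‖g‖ := by
      rw [hpt, horth]
      calc |⟪g, q⟫_ℝ| ≤ ‖g‖ * ‖q‖ := abs_real_inner_le_norm g q
        _ = ‖q‖ * ‖g‖ := mul_comm _ _
    have hqS : ‖q‖ ≤ S := by
      have : Real.sqrt ⟪((E x).comp ((ContinuousLinearMap.id ℝ H - P).comp K)) e, e⟫_ℝ
          = ‖q‖ := by rw [hval]; exact Real.sqrt_sq (norm_nonneg q)
      rw [← this, hS, he]
      exact le_ciSup (f := fun j : Fin m => Real.sqrt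
        ⟪((E x).comp ((ContinuousLinearMap.id ℝ H - P).comp K))
            (EuclideanSpace.single j (1 : ℝ)),
          EuclideanSpace.single j (1 : ℝ)⟫_ℝ)
        (Set.Finite.bddAbove (Set.finite_range _)) i
    calc |(E x) g i| ≤ ‖q‖ * ‖g‖ := hbound
      _ ≤ S * ‖g‖ := mul_le_mul_of_nonneg_right hqS (norm_nonneg g)
end

section
/- Take Y = EuclideanSpace ℝ (Fin m) with standard basis (e_i). Let U ⊆ H be a closed subspace and P the orthogonal projection of H onto U. Then for every f ∈ H and x ∈ X, ∑_{i} |(E_x(f − P f))_i| ≤ √m · ‖E_x ∘ (id_H − P) ∘ K_x‖_{L(Y)}^{1/2} · ‖f − P f‖_H. (The ℓ¹ pointwise error bound of the paper's power-function theorem: ‖E_x(I−Π_U)f‖₁ ≤ √m · √‖𝔎(x,x) − 𝔎_U(x,x)‖ · ‖(I−Π_U)f‖.) -/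
open scoped InnerProductSpace

/-- ℓ¹ pointwise error bound of the power-function theorem, with
`Y = EuclideanSpace ℝ (Fin m)`: for a closed subspace `U ⊆ H` with orthogonal
projection `P`, for every `f ∈ H` and `x ∈ X`,
`∑_i |(E_x(f − P f))_i| ≤ √m · ‖E_x ∘ (id_H − P) ∘ K_x‖^{1/2} · ‖f − P f‖`. -/
theorem power_function_pointwise_l1_bound
    {X H : Type*} {m : ℕ}
    [NormedAddCommGroup H] [InnerProductSpace ℝ H] [CompleteSpace H]
    (E : X → H →L[ℝ] EuclideanSpace ℝ (Fin m))
    (U : Submodule ℝ H) (hU : IsClosed (U : Set H))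
    (P : H →L[ℝ] H) (hP : ∀ h : H, P h ∈ U ∧ h - P h ∈ Uᗮ) :
    ∀ (f : H) (x : X),
      (∑ i : Fin m, |(E x) (f - P f) i|)
        ≤ Real.sqrt (m : ℝ)
            * Real.sqrt ‖(E x).comp ((ContinuousLinearMap.id ℝ H - P).comp (E x).adjoint)‖
            * ‖f - P f‖ := by
  intro f x
  set Q : H →L[ℝ] H := ContinuousLinearMap.id ℝ H - P with hQdef
  have hQapp : ∀ h : H, Q h = h - P h := fun h => rfl
  have hQmem : ∀ h : H, Q h ∈ Uᗮ := fun h => by rw [hQapp]; exact (hP h).2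
  have hPzero : ∀ h : H, h ∈ Uᗮ → P h = 0 := by
    intro h hh
    have h1 : P h ∈ U := (hP h).1
    have h2 : P h ∈ Uᗮ := by
      have := Uᗮ.sub_mem hh (hP h).2
      simpa using this
    have : ⟪P h, P h⟫_ℝ = 0 := h2 (P h) h1
    exact inner_self_eq_zero.mp this
  have hQQ : ∀ h : H, Q (Q h) = Q h := by
    intro h
    rw [hQapp (Q h), hPzero (Q h) (hQmem h), sub_zero]
  -- Q is self-adjoint
  have hQsa : ContinuousLinearMap.adjoint Q = Q := by
    symm
    rw [ContinuousLinearMap.eq_adjoint_iff]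
    intro a b
    have key : ∀ u v : H, ⟪Q u, v⟫_ℝ = ⟪Q u, Q v⟫_ℝ := by
      intro u v
      have : ⟪Q u, P v⟫_ℝ = 0 := by
        have := hQmem u (P v) (hP v).1
        rwa [real_inner_comm] at this
      have hv' : Q v + P v = v := by rw [hQapp]; abel
      calc ⟪Q u, v⟫_ℝ = ⟪Q u, Q v + P v⟫_ℝ := by rw [hv']
        _ = ⟪Q u, Q v⟫_ℝ + ⟪Q u, P v⟫_ℝ := inner_add_right _ _ _
        _ = ⟪Q u, Q v⟫_ℝ := by rw [this, add_zero]
    calc ⟪Q a, b⟫_ℝ = ⟪Q a, Q b⟫_ℝ := key a b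
      _ = ⟪Q b, Q a⟫_ℝ := real_inner_comm _ _
      _ = ⟪Q b, a⟫_ℝ := (key b a).symm
      _ = ⟪a, Q b⟫_ℝ := real_inner_comm _ _
  set S : H →L[ℝ] EuclideanSpace ℝ (Fin m) := (E x).comp Q with hSdef
  have hT : (E x).comp (Q.comp (E x).adjoint) = S.comp (ContinuousLinearMap.adjoint S) := by
    rw [hSdef, ContinuousLinearMap.adjoint_comp, hQsa]
    ext y i
    simp [ContinuousLinearMap.comp_apply, hQQ]
  have hnormT : ‖(E x).comp (Q.comp (E x).adjoint)‖ = ‖S‖ * ‖S‖ := by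
    rw [hT]
    have := ContinuousLinearMap.norm_adjoint_comp_self (ContinuousLinearMap.adjoint S)
    rw [ContinuousLinearMap.adjoint_adjoint] at this
    rw [this, LinearIsometryEquiv.norm_map]
  have hsqrtT : Real.sqrt ‖(E x).comp (Q.comp (E x).adjoint)‖ = ‖S‖ := by
    rw [hnormT, Real.sqrt_mul_self (norm_nonneg _)]
  set g : H := f - P f with hg
  have hgQ : Q g = g := by
    have hgf : g = Q f := by rw [hg, hQapp]
    rw [hgf, hQQ]
  have hEg : (E x) g = S g := by
    rw [hSdef, ContinuousLinearMap.comp_apply, hgQ]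
  -- ℓ¹-ℓ² bound
  have hl1gen : ∀ v : EuclideanSpace ℝ (Fin m),
      (∑ i : Fin m, |v i|) ≤ Real.sqrt (m : ℝ) * ‖v‖ := by
    intro v
    have h1 : (∑ i : Fin m, |v i|) ^ 2 ≤ (m : ℝ) * ∑ i : Fin m, |v i| ^ 2 := by
      have := sq_sum_le_card_mul_sum_sq (s := Finset.univ) (f := fun i : Fin m => |v i|)
      simpa using this
    have h2 : ‖v‖ = Real.sqrt (∑ i : Fin m, v i ^ 2) := by
      rw [EuclideanSpace.norm_eq]
      congr 1
      exact Finset.sum_congr rfl fun i _ => by rw [Real.norm_eq_abs, sq_abs]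
    have h3 : (∑ i : Fin m, |v i|) ≤ Real.sqrt ((m : ℝ) * ∑ i : Fin m, v i ^ 2) := by
      rw [← Real.sqrt_sq (Finset.sum_nonneg fun i _ => abs_nonneg _)]
      apply Real.sqrt_le_sqrt
      calc (∑ i : Fin m, |v i|) ^ 2 ≤ (m : ℝ) * ∑ i : Fin m, |v i| ^ 2 := h1
        _ = (m : ℝ) * ∑ i : Fin m, v i ^ 2 := by
            congr 1; exact Finset.sum_congr rfl fun i _ => sq_abs _
    rwa [Real.sqrt_mul (by positivity), ← h2] at h3
  calc (∑ i : Fin m, |(E x) g i|) ≤ Real.sqrt (m : ℝ) * ‖(E x) g‖ := hl1gen _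
    _ ≤ Real.sqrt (m : ℝ) * (‖S‖ * ‖g‖) := by
        apply mul_le_mul_of_nonneg_left _ (Real.sqrt_nonneg _)
        rw [hEg]
        exact S.le_opNorm g
    _ = Real.sqrt (m : ℝ) * Real.sqrt ‖(E x).comp (Q.comp (E x).adjoint)‖ * ‖g‖ := by
        rw [hsqrtT]; ring
end
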